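/- Assume the transition-constrained dual LP is feasible. Let (d*, p*) be an optimal solution of the transition-constrained dual LP with derived policy π*(a|s) = p*(s,a)/d*(s), and let (v*, q*, r_c*) be an optimal solution of the transition-constrained primal LP. Then (i) v* and q* satisfy the Bellman optimality equations for the modified reward r*_ATC(s,a,s') = r(s,a,s') − r_c*(s,a) c(s,a,s'), so they equal the optimal value functions of the MDP with reward r*_ATC; (ii) π* is greedy with respect to q*: for every state s, every action a with π*(a|s) > 0 satisfies a ∈ argmax_{a'} q*(s,a'); and (iii) r_c*(s,a) = 0 for every (s,a) with p*(s,a) > 0 and c̄(s,a) < 0. -/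

import Mathlib

open Finset

section MDPDefs

variable {S A : Type*}

/-- A (stationary, stochastic) policy on finite state/action spaces. -/
def IsPolicy [Fintype A] (π : S → A → ℝ) : Prop :=
  (∀ s a, 0 ≤ π s a) ∧ ∀ s, ∑ a, π s a = 1

/-- `d` is the (discounted) state visitation density of the policy `π`:
it satisfies `d(s) = (1-γ)ι(s) + γ Σ_{s',a'} d(s') π(a'|s') τ(s|s',a')`. -/
def IsVisit [Fintype S] [Fintype A] (ι : S → ℝ) (τ : S → A → S → ℝ) (γ : ℝ)
    (π : S → A → ℝ) (d : S → ℝ) : Prop :=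
  ∀ s, d s = (1 - γ) * ι s + γ * ∑ s', ∑ a', d s' * π s' a' * τ s' a' s

/-- Feasibility for the value-learning dual LP. -/
def DualFeas [Fintype S] [Fintype A] (ι : S → ℝ) (τ : S → A → S → ℝ) (γ : ℝ)
    (d : S → ℝ) (p : S → A → ℝ) : Prop :=
  (∀ s, ∑ a, p s a = d s) ∧
  (∀ s, d s = (1 - γ) * ι s + γ * ∑ s', ∑ a', p s' a' * τ s' a' s) ∧
  ∀ s a, 0 ≤ p s a

/-- The dual objective: the average reward under the state-action density `p`,
`Σ_{s,a} p(s,a) Σ_{s'} τ(s'|s,a) r(s,a,s')`. -/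
def DualObj [Fintype S] [Fintype A] (τ : S → A → S → ℝ) (r : S → A → S → ℝ)
    (p : S → A → ℝ) : ℝ :=
  ∑ s, ∑ a, p s a * ∑ s', τ s a s' * r s a s'

/-- The standing MDP assumptions: `ι` is an everywhere-positive initial-state
distribution, `τ(·|s,a)` are transition probabilities and `γ ∈ [0,1)`. -/
def IsMDP [Fintype S] [Fintype A] (ι : S → ℝ) (τ : S → A → S → ℝ) (γ : ℝ) : Prop :=
  (∀ s, 0 < ι s) ∧ (∑ s, ι s = 1) ∧
  (∀ s a s', 0 ≤ τ s a s') ∧ (∀ s a, ∑ s', τ s a s' = 1) ∧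
  0 ≤ γ ∧ γ < 1

end MDPDefs

/-!
Primal optimality pins `v*` down as the optimal value of the MDP with reward `r*_ATC`: the optimal
value `V` of that MDP (a Banach fixed point) is primal feasible together with `r_c*`, and `V ≤ v*`
by the discounted maximum principle, so `ι > 0` forces `V = v*`.

Strong duality comes from the MDP restricted to the actions with `c̄ ≤ 0`, which exist at every
state because dual feasibility forces `d*(s) ≥ (1 - γ) ι(s) > 0`. Its optimal value becomes primal
feasible once `r_c` is made large on the other actions, and the occupancy measure of a greedy policy
is dual feasible with dual objective equal to the primal objective of that value. In the
weak-duality identity `DualObj p* = primal value - Σ p* (v* - q*) + Σ r_c* p* c̄` both gap terms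
have a sign, so strong duality makes every term of both gaps vanish; this is (ii) and (iii).
-/

section

variable {S A : Type*} [Fintype S]

section Kernel

variable {P : S → S → ℝ} {γ : ℝ}

theorem nonpos_of_le_discounted_mean (hP0 : ∀ s s', 0 ≤ P s s') (hP1 : ∀ s, ∑ s', P s s' = 1)
    (hγ0 : 0 ≤ γ) (hγ1 : γ < 1) {x : S → ℝ} (hx : ∀ s, x s ≤ γ * ∑ s', P s s' * x s')
    (s : S) : x s ≤ 0 := by
  have : Nonempty S := ⟨s⟩
  obtain ⟨m, hm⟩ := Finite.exists_max x
  have hmean : ∑ s', P m s' * x s' ≤ x m :=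
    calc ∑ s', P m s' * x s' ≤ ∑ s', P m s' * x m :=
          sum_le_sum fun s' _ => mul_le_mul_of_nonneg_left (hm s') (hP0 m s')
      _ = x m := by rw [← sum_mul, hP1, one_mul]
  have hxm : x m ≤ γ * x m := (hx m).trans (mul_le_mul_of_nonneg_left hmean hγ0)
  have : x m ≤ 0 := by nlinarith
  exact (hm s).trans this

theorem eq_zero_of_le_discounted_inflow (hP1 : ∀ s, ∑ s', P s s' = 1) (hγ1 : γ < 1)
    {x : S → ℝ} (hx0 : ∀ s, 0 ≤ x s) (hx : ∀ s, x s ≤ γ * ∑ s', P s' s * x s') : x = 0 := by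
  have htotal : ∑ s, x s ≤ γ * ∑ s, x s :=
    calc ∑ s, x s ≤ ∑ s, γ * ∑ s', P s' s * x s' := sum_le_sum fun s _ => hx s
      _ = γ * ∑ s', x s' := by
        rw [← mul_sum, sum_comm]
        simp_rw [← sum_mul, hP1, one_mul]
  have hsum : ∑ s, x s = 0 := le_antisymm (by nlinarith) (sum_nonneg fun s _ => hx0 s)
  exact (Fintype.sum_eq_zero_iff_of_nonneg hx0).1 hsum

theorem nonneg_of_eq_add_discounted_inflow (hP0 : ∀ s s', 0 ≤ P s s')
    (hP1 : ∀ s, ∑ s', P s s' = 1) (hγ0 : 0 ≤ γ) (hγ1 : γ < 1) {b d : S → ℝ}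
    (hb : ∀ s, 0 ≤ b s) (hd : ∀ s, d s = b s + γ * ∑ s', P s' s * d s') (s : S) : 0 ≤ d s := by
  have hneg : (fun s => max (-d s) 0) = 0 :=
    eq_zero_of_le_discounted_inflow hP1 hγ1 (fun s => le_max_right _ _) fun s => by
      refine max_le ?_ (mul_nonneg hγ0 (sum_nonneg fun s' _ =>
        mul_nonneg (hP0 s' s) (le_max_right _ _)))
      calc -d s ≤ γ * ∑ s', P s' s * -d s' := by
            rw [hd s]
            simp only [mul_neg, sum_neg_distrib]
            linarith [hb s]
        _ ≤ γ * ∑ s', P s' s * max (-d s') 0 := mul_le_mul_of_nonneg_left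
            (sum_le_sum fun s' _ => mul_le_mul_of_nonneg_left (le_max_left _ _) (hP0 s' s)) hγ0
  simpa using congrFun hneg s

theorem exists_nonneg_discounted_inflow_eq (hP0 : ∀ s s', 0 ≤ P s s')
    (hP1 : ∀ s, ∑ s', P s s' = 1) (hγ0 : 0 ≤ γ) (hγ1 : γ < 1) {b : S → ℝ}
    (hb : ∀ s, 0 ≤ b s) :
    ∃ d : S → ℝ, (∀ s, 0 ≤ d s) ∧ ∀ s, d s = b s + γ * ∑ s', P s' s * d s' := by
  let L : (S → ℝ) →ₗ[ℝ] S → ℝ := LinearMap.id - γ • (Matrix.of fun i j => P j i).mulVecLin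
  have hL : ∀ d s, L d s = d s - γ * ∑ s', P s' s * d s' := fun d s => by
    simp [L, Matrix.mulVec, dotProduct]
  have hinj : Function.Injective L := by
    rw [← LinearMap.ker_eq_bot, LinearMap.ker_eq_bot']
    intro d hd
    have hfix : ∀ s, d s = γ * ∑ s', P s' s * d s' := fun s =>
      sub_eq_zero.1 ((hL d s).symm.trans (congrFun hd s))
    have hpos := nonneg_of_eq_add_discounted_inflow hP0 hP1 hγ0 hγ1 (b := 0) (fun _ => le_rfl)
      (by simpa using hfix)
    have hneg := nonneg_of_eq_add_discounted_inflow hP0 hP1 hγ0 hγ1 (b := 0) (d := -d)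
      (fun _ => le_rfl) (by simpa using hfix)
    funext s
    exact le_antisymm (neg_nonneg.1 (hneg s)) (hpos s)
  obtain ⟨d, hd⟩ := LinearMap.injective_iff_surjective.1 hinj b
  have hflow : ∀ s, d s = b s + γ * ∑ s', P s' s * d s' := fun s => by
    linarith [hL d s, congrFun hd s]
  exact ⟨d, nonneg_of_eq_add_discounted_inflow hP0 hP1 hγ0 hγ1 hb hflow, hflow⟩

end Kernel

section Bellman

variable {τ : S → A → S → ℝ} {γ : ℝ}

-- `stepMean τ c` is the paper's `c̄`, and `DualObj τ r p = ∑ s a, p s a * stepMean τ r s a`.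
def stepMean (τ : S → A → S → ℝ) (f : S → A → S → ℝ) (s : S) (a : A) : ℝ :=
  ∑ s', τ s a s' * f s a s'

def bellmanQ (τ : S → A → S → ℝ) (γ : ℝ) (R : S → A → S → ℝ) (v : S → ℝ) (s : S) (a : A) :
    ℝ :=
  ∑ s', τ s a s' * (R s a s' + γ * v s')

theorem bellmanQ_eq (R : S → A → S → ℝ) (v : S → ℝ) (s : S) (a : A) :
    bellmanQ τ γ R v s a = stepMean τ R s a + γ * ∑ s', τ s a s' * v s' := by
  simp only [bellmanQ, stepMean, mul_add, sum_add_distrib, mul_sum]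
  exact congrArg _ (sum_congr rfl fun _ _ => mul_left_comm _ _ _)

theorem bellmanQ_sub_bellmanQ (R : S → A → S → ℝ) (u v : S → ℝ) (s : S) (a : A) :
    bellmanQ τ γ R u s a - bellmanQ τ γ R v s a = γ * ∑ s', τ s a s' * (u s' - v s') := by
  simp only [bellmanQ, ← sum_sub_distrib, mul_sum]
  exact sum_congr rfl fun _ _ => by ring

def bellmanOpt (τ : S → A → S → ℝ) (γ : ℝ) (K : S → Finset A) (hK : ∀ s, (K s).Nonempty)
    (R : S → A → S → ℝ) (v : S → ℝ) : S → ℝ :=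
  fun s => (K s).sup' (hK s) (bellmanQ τ γ R v s)

variable {K : S → Finset A} {hK : ∀ s, (K s).Nonempty} {R : S → A → S → ℝ}

theorem bellmanOpt_le_add (hτ0 : ∀ s a s', 0 ≤ τ s a s') (hτ1 : ∀ s a, ∑ s', τ s a s' = 1)
    (hγ0 : 0 ≤ γ) {u v : S → ℝ} {M : ℝ} (h : ∀ s, u s ≤ v s + M) (s : S) :
    bellmanOpt τ γ K hK R u s ≤ bellmanOpt τ γ K hK R v s + γ * M := by
  refine sup'_le _ _ fun a ha => ?_
  have hmean : ∑ s', τ s a s' * (u s' - v s') ≤ M :=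
    calc ∑ s', τ s a s' * (u s' - v s') ≤ ∑ s', τ s a s' * M :=
          sum_le_sum fun s' _ => mul_le_mul_of_nonneg_left (by linarith [h s']) (hτ0 s a s')
      _ = M := by rw [← sum_mul, hτ1, one_mul]
  have hQ := bellmanQ_sub_bellmanQ (τ := τ) (γ := γ) R u v s a
  have hle : bellmanQ τ γ R v s a ≤ bellmanOpt τ γ K hK R v s := le_sup' _ ha
  nlinarith [mul_le_mul_of_nonneg_left hmean hγ0]

theorem contractingWith_bellmanOpt (hτ0 : ∀ s a s', 0 ≤ τ s a s')
    (hτ1 : ∀ s a, ∑ s', τ s a s' = 1) (hγ0 : 0 ≤ γ) (hγ1 : γ < 1) :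
    ContractingWith ⟨γ, hγ0⟩ (bellmanOpt τ γ K hK R) := by
  refine ⟨by exact_mod_cast hγ1, LipschitzWith.of_dist_le_mul fun u v => ?_⟩
  have hdist : ∀ (u v : S → ℝ) s, u s ≤ v s + dist u v := fun u v s => by
    have := dist_le_pi_dist u v s
    rw [Real.dist_eq, abs_sub_le_iff] at this
    linarith
  show dist _ _ ≤ γ * dist u v
  rw [dist_pi_le_iff (by positivity)]
  intro s
  rw [Real.dist_eq, abs_sub_le_iff]
  have huv := bellmanOpt_le_add (K := K) (hK := hK) (R := R) hτ0 hτ1 hγ0 (hdist u v) s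
  have hvu := bellmanOpt_le_add (K := K) (hK := hK) (R := R) hτ0 hτ1 hγ0 (hdist v u) s
  rw [dist_comm v u] at hvu
  exact ⟨by linarith, by linarith⟩

theorem exists_bellmanQ_optimal (hτ0 : ∀ s a s', 0 ≤ τ s a s')
    (hτ1 : ∀ s a, ∑ s', τ s a s' = 1) (hγ0 : 0 ≤ γ) (hγ1 : γ < 1)
    (K : S → Finset A) (hK : ∀ s, (K s).Nonempty) (R : S → A → S → ℝ) :
    ∃ (V : S → ℝ) (π : S → A), (∀ s, π s ∈ K s) ∧ (∀ s, bellmanQ τ γ R V s (π s) = V s) ∧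
      ∀ s, ∀ a ∈ K s, bellmanQ τ γ R V s a ≤ V s := by
  set V := (contractingWith_bellmanOpt hτ0 hτ1 hγ0 hγ1 (K := K) (hK := hK) (R := R)).fixedPoint
  have hV : bellmanOpt τ γ K hK R V = V := ContractingWith.fixedPoint_isFixedPt _
  choose π hπK hπ using fun s => exists_mem_eq_sup' (hK s) (bellmanQ τ γ R V s)
  exact ⟨V, π, hπK, fun s => (hπ s).symm.trans (congrFun hV s),
    fun s a ha => (le_sup' _ ha).trans (congrFun hV s).le⟩

theorem le_of_le_bellmanQ_of_bellmanQ_le (hτ0 : ∀ s a s', 0 ≤ τ s a s')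
    (hτ1 : ∀ s a, ∑ s', τ s a s' = 1) (hγ0 : 0 ≤ γ) (hγ1 : γ < 1) (π : S → A) {u v : S → ℝ}
    (hu : ∀ s, u s ≤ bellmanQ τ γ R u s (π s)) (hv : ∀ s, bellmanQ τ γ R v s (π s) ≤ v s)
    (s : S) : u s ≤ v s := by
  have := nonpos_of_le_discounted_mean (P := fun s s' => τ s (π s) s') (fun s _ => hτ0 _ _ _)
    (fun s => hτ1 _ _) hγ0 hγ1 (x := fun s => u s - v s)
    (fun s => by linarith [hu s, hv s, bellmanQ_sub_bellmanQ (τ := τ) (γ := γ) R u v s (π s)]) s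
  linarith

def IsBellmanOptimal (τ : S → A → S → ℝ) (γ : ℝ) (R : S → A → S → ℝ) (v : S → ℝ) : Prop :=
  (∀ s a, bellmanQ τ γ R v s a ≤ v s) ∧ ∃ π : S → A, ∀ s, bellmanQ τ γ R v s (π s) = v s

theorem IsBellmanOptimal.unique (hτ0 : ∀ s a s', 0 ≤ τ s a s')
    (hτ1 : ∀ s a, ∑ s', τ s a s' = 1) (hγ0 : 0 ≤ γ) (hγ1 : γ < 1) {u v : S → ℝ}
    (hu : IsBellmanOptimal τ γ R u) (hv : IsBellmanOptimal τ γ R v) : u = v := by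
  obtain ⟨hu, π, hπ⟩ := hu
  obtain ⟨hv, σ, hσ⟩ := hv
  funext s
  exact le_antisymm
    (le_of_le_bellmanQ_of_bellmanQ_le hτ0 hτ1 hγ0 hγ1 π (fun s => (hπ s).ge)
      (fun s => hv s (π s)) s)
    (le_of_le_bellmanQ_of_bellmanQ_le hτ0 hτ1 hγ0 hγ1 σ (fun s => (hσ s).ge)
      (fun s => hu s (σ s)) s)

theorem isBellmanOptimal_iff_eq_ciSup [Finite A] [Nonempty A] {v : S → ℝ} :
    IsBellmanOptimal τ γ R v ↔ ∀ s, v s = ⨆ a, bellmanQ τ γ R v s a := by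
  constructor
  · rintro ⟨hle, π, hπ⟩ s
    exact (ciSup_eq_of_forall_le_of_forall_lt_exists_gt (hle s)
      fun w hw => ⟨π s, (hπ s).symm ▸ hw⟩).symm
  · intro h
    refine ⟨fun s a => (h s).symm ▸ le_ciSup (Finite.bddAbove_range _) a, ?_⟩
    choose π hπ using fun s => exists_eq_ciSup_of_finite (f := bellmanQ τ γ R v s)
    exact ⟨π, fun s => (hπ s).trans (h s).symm⟩

end Bellman

section LinearProgram

variable {ι : S → ℝ} {τ : S → A → S → ℝ} {γ : ℝ} {r c : S → A → S → ℝ}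

def atcReward (r c : S → A → S → ℝ) (rc : S → A → ℝ) : S → A → S → ℝ :=
  fun s a s' => r s a s' - rc s a * c s a s'

def PrimalFeas (τ : S → A → S → ℝ) (γ : ℝ) (r c : S → A → S → ℝ) (v : S → ℝ)
    (q rc : S → A → ℝ) : Prop :=
  (∀ s a, q s a ≤ v s) ∧ (∀ s a, q s a = bellmanQ τ γ (atcReward r c rc) v s a) ∧
    ∀ s a, 0 ≤ rc s a

theorem stepMean_atcReward (rc : S → A → ℝ) (s : S) (a : A) :
    stepMean τ (atcReward r c rc) s a = stepMean τ r s a - rc s a * stepMean τ c s a := by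
  simp only [stepMean, atcReward, mul_sub, sum_sub_distrib, mul_sum]
  exact congrArg _ (sum_congr rfl fun _ _ => by ring)

theorem bellmanQ_atcReward (rc : S → A → ℝ) (v : S → ℝ) (s : S) (a : A) :
    bellmanQ τ γ (atcReward r c rc) v s a =
      bellmanQ τ γ r v s a - rc s a * stepMean τ c s a := by
  rw [bellmanQ_eq, bellmanQ_eq, stepMean_atcReward]
  ring

theorem exists_primalFeas_of_bellmanQ_le {V : S → ℝ}
    (hV : ∀ s a, stepMean τ c s a ≤ 0 → bellmanQ τ γ r V s a ≤ V s) :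
    ∃ rc, PrimalFeas τ γ r c V (bellmanQ τ γ (atcReward r c rc) V) rc := by
  classical
  -- a penalty just large enough to make every action with `c̄ > 0` unattractive
  refine ⟨fun s a => if stepMean τ c s a ≤ 0 then 0
      else |bellmanQ τ γ r V s a - V s| / stepMean τ c s a, fun s a => ?_, fun _ _ => rfl,
    fun s a => ?_⟩
  · rw [bellmanQ_atcReward]
    split_ifs with h
    · simpa using hV s a h
    · rw [div_mul_cancel₀ _ (by linarith : stepMean τ c s a ≠ 0)]
      linarith [le_abs_self (bellmanQ τ γ r V s a - V s)]
  · dsimp only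
    split_ifs with h
    · exact le_rfl
    · exact div_nonneg (abs_nonneg _) (by linarith)

variable [Fintype A]

theorem dualObj_atcReward (rc p : S → A → ℝ) :
    DualObj τ (atcReward r c rc) p =
      DualObj τ r p - ∑ s, ∑ a, rc s a * (p s a * stepMean τ c s a) := by
  simp only [DualObj, ← sum_sub_distrib]
  refine sum_congr rfl fun s _ => sum_congr rfl fun a _ => ?_
  change p s a * stepMean τ (atcReward r c rc) s a =
    p s a * stepMean τ r s a - rc s a * (p s a * stepMean τ c s a)
  rw [stepMean_atcReward]
  ring

theorem DualFeas.sum_mul_bellmanQ {d : S → ℝ} {p : S → A → ℝ} (h : DualFeas ι τ γ d p)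
    (R : S → A → S → ℝ) (v : S → ℝ) :
    ∑ s, ∑ a, p s a * bellmanQ τ γ R v s a =
      DualObj τ R p + ∑ s, d s * v s - ∑ s, ι s * ((1 - γ) * v s) := by
  have hin : ∀ s', d s' - (1 - γ) * ι s' = γ * ∑ s, ∑ a, p s a * τ s a s' := fun s' => by
    linarith [h.2.1 s']
  have hnext : ∑ s, ∑ a, p s a * (γ * ∑ s', τ s a s' * v s') =
      ∑ s', (d s' - (1 - γ) * ι s') * v s' := by
    simp only [hin, mul_sum, sum_mul]
    symm
    rw [sum_comm]
    refine sum_congr rfl fun s _ => ?_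
    rw [sum_comm]
    exact sum_congr rfl fun a _ => sum_congr rfl fun s' _ => by ring
  have hsplit : ∑ s', (d s' - (1 - γ) * ι s') * v s' =
      ∑ s, d s * v s - ∑ s, ι s * ((1 - γ) * v s) := by
    rw [← sum_sub_distrib]
    exact sum_congr rfl fun _ _ => by ring
  simp only [bellmanQ_eq, mul_add, sum_add_distrib, hnext, hsplit]
  rw [DualObj]
  simp only [stepMean]
  ring

theorem DualFeas.dualObj_eq_of_bellmanQ_eq [DecidableEq A] {d : S → ℝ} {π : S → A}
    (h : DualFeas ι τ γ d fun s a => if a = π s then d s else 0) {R : S → A → S → ℝ}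
    {V : S → ℝ} (hV : ∀ s, bellmanQ τ γ R V s (π s) = V s) :
    DualObj τ R (fun s a => if a = π s then d s else 0) = ∑ s, ι s * ((1 - γ) * V s) := by
  have := h.sum_mul_bellmanQ R V
  simp only [ite_mul, zero_mul, sum_ite_eq', mem_univ, if_true, hV] at this
  linarith

theorem DualFeas.dualObj_eq_sub_gaps {d : S → ℝ} {p : S → A → ℝ} (h : DualFeas ι τ γ d p)
    {v : S → ℝ} {q rc : S → A → ℝ}
    (hq : ∀ s a, q s a = bellmanQ τ γ (atcReward r c rc) v s a) :
    DualObj τ r p = ∑ s, ι s * ((1 - γ) * v s) - ∑ s, ∑ a, p s a * (v s - q s a) +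
      ∑ s, ∑ a, rc s a * (p s a * stepMean τ c s a) := by
  have hpq := h.sum_mul_bellmanQ (atcReward r c rc) v
  simp only [← hq, dualObj_atcReward] at hpq
  have hslack : ∑ s, ∑ a, p s a * (v s - q s a) = ∑ s, d s * v s - ∑ s, ∑ a, p s a * q s a := by
    simp only [mul_sub, sum_sub_distrib, ← sum_mul, h.1]
  linarith

theorem DualFeas.exists_pos {d : S → ℝ} {p : S → A → ℝ} (h : DualFeas ι τ γ d p)
    (hι : ∀ s, 0 < ι s) (hτ0 : ∀ s a s', 0 ≤ τ s a s') (hγ0 : 0 ≤ γ) (hγ1 : γ < 1) (s : S) :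
    ∃ a, 0 < p s a := by
  have hin : 0 ≤ γ * ∑ s', ∑ a', p s' a' * τ s' a' s :=
    mul_nonneg hγ0 (sum_nonneg fun _ _ => sum_nonneg fun _ _ => mul_nonneg (h.2.2 _ _) (hτ0 _ _ _))
  have hd : 0 < ∑ a, p s a := by
    rw [h.1, h.2.1]
    nlinarith [hι s]
  obtain ⟨a, -, ha⟩ := exists_lt_of_sum_lt (f := fun _ => (0 : ℝ)) (by simpa using hd)
  exact ⟨a, ha⟩

end LinearProgram

section Optimality

variable [Fintype A] {ι : S → ℝ} {τ : S → A → S → ℝ} {γ : ℝ} {r c : S → A → S → ℝ}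

theorem exists_dualFeas_occupancy [DecidableEq A] (hι : ∀ s, 0 ≤ ι s)
    (hτ0 : ∀ s a s', 0 ≤ τ s a s') (hτ1 : ∀ s a, ∑ s', τ s a s' = 1) (hγ0 : 0 ≤ γ)
    (hγ1 : γ < 1) (π : S → A) :
    ∃ d : S → ℝ, (∀ s, 0 ≤ d s) ∧ DualFeas ι τ γ d fun s a => if a = π s then d s else 0 := by
  obtain ⟨d, hd0, hflow⟩ := exists_nonneg_discounted_inflow_eq (P := fun s s' => τ s (π s) s')
    (fun _ _ => hτ0 _ _ _) (fun _ => hτ1 _ _) hγ0 hγ1 (b := fun s => (1 - γ) * ι s)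
    fun s => mul_nonneg (by linarith) (hι s)
  refine ⟨d, hd0, fun s => by simp, fun s => ?_, fun s a => ?_⟩
  · simp only [ite_mul, zero_mul, sum_ite_eq', mem_univ, if_true]
    conv_lhs => rw [hflow s]
    exact congrArg _ (congrArg _ (sum_congr rfl fun _ _ => mul_comm _ _))
  · dsimp only
    split_ifs
    · exact hd0 s
    · exact le_rfl

theorem isBellmanOptimal_of_primal_optimal [Nonempty A] (hι : ∀ s, 0 < ι s)
    (hτ0 : ∀ s a s', 0 ≤ τ s a s') (hτ1 : ∀ s a, ∑ s', τ s a s' = 1) (hγ0 : 0 ≤ γ)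
    (hγ1 : γ < 1) {v : S → ℝ} {q rc : S → A → ℝ} (hv : PrimalFeas τ γ r c v q rc)
    (hvopt : ∀ v' q' rc', PrimalFeas τ γ r c v' q' rc' →
      ∑ s, ι s * ((1 - γ) * v s) ≤ ∑ s, ι s * ((1 - γ) * v' s)) :
    IsBellmanOptimal τ γ (atcReward r c rc) v := by
  obtain ⟨V, π, -, hVπ, hVle⟩ := exists_bellmanQ_optimal hτ0 hτ1 hγ0 hγ1 (fun _ => univ)
    (fun _ => univ_nonempty) (atcReward r c rc)
  have hQv : ∀ s a, bellmanQ τ γ (atcReward r c rc) v s a ≤ v s := fun s a =>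
    hv.2.1 s a ▸ hv.1 s a
  have hVv : ∀ s, V s ≤ v s :=
    le_of_le_bellmanQ_of_bellmanQ_le hτ0 hτ1 hγ0 hγ1 π (fun s => (hVπ s).ge) fun s => hQv s (π s)
  have hle : ∀ s ∈ univ, ι s * ((1 - γ) * V s) ≤ ι s * ((1 - γ) * v s) := fun s _ =>
    mul_le_mul_of_nonneg_left (mul_le_mul_of_nonneg_left (hVv s) (by linarith)) (hι s).le
  have hsum := le_antisymm (sum_le_sum hle)
    (hvopt V _ rc ⟨fun s a => hVle s a (mem_univ a), fun _ _ => rfl, hv.2.2⟩)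
  obtain rfl : V = v := funext fun s => by
    have := (sum_eq_sum_iff_of_le hle).1 hsum s (mem_univ s)
    have hpos : 0 < ι s * (1 - γ) := mul_pos (hι s) (by linarith)
    nlinarith
  exact ⟨hQv, π, hVπ⟩

theorem primalValue_le_dualObj (hι : ∀ s, 0 < ι s) (hτ0 : ∀ s a s', 0 ≤ τ s a s')
    (hτ1 : ∀ s a, ∑ s', τ s a s' = 1) (hγ0 : 0 ≤ γ) (hγ1 : γ < 1) {d : S → ℝ}
    {p : S → A → ℝ} (hd : DualFeas ι τ γ d p) (hpc : ∀ s a, p s a * stepMean τ c s a ≤ 0)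
    (hpopt : ∀ d' p', DualFeas ι τ γ d' p' ∧ (∀ s a, p' s a * stepMean τ c s a ≤ 0) →
      DualObj τ r p' ≤ DualObj τ r p)
    {v : S → ℝ} (hvopt : ∀ v' q' rc', PrimalFeas τ γ r c v' q' rc' →
      ∑ s, ι s * ((1 - γ) * v s) ≤ ∑ s, ι s * ((1 - γ) * v' s)) :
    ∑ s, ι s * ((1 - γ) * v s) ≤ DualObj τ r p := by
  classical
  let K : S → Finset A := fun s => univ.filter fun a => stepMean τ c s a ≤ 0
  have hK : ∀ s, (K s).Nonempty := fun s => by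
    obtain ⟨a, ha⟩ := hd.exists_pos hι hτ0 hγ0 hγ1 s
    exact ⟨a, mem_filter.2 ⟨mem_univ a, nonpos_of_mul_nonpos_right (hpc s a) ha⟩⟩
  obtain ⟨V, π, hπK, hVπ, hVle⟩ := exists_bellmanQ_optimal hτ0 hτ1 hγ0 hγ1 K hK r
  obtain ⟨rc, hV⟩ := exists_primalFeas_of_bellmanQ_le (c := c) fun s a ha =>
    hVle s a (mem_filter.2 ⟨mem_univ a, ha⟩)
  obtain ⟨d', hd'0, hd'⟩ := exists_dualFeas_occupancy (fun s => (hι s).le) hτ0 hτ1 hγ0 hγ1 π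
  have hpc' : ∀ s a, (if a = π s then d' s else 0) * stepMean τ c s a ≤ 0 := fun s a => by
    split_ifs with h
    · exact mul_nonpos_of_nonneg_of_nonpos (hd'0 s) (h ▸ (mem_filter.1 (hπK s)).2)
    · rw [zero_mul]
  calc ∑ s, ι s * ((1 - γ) * v s) ≤ ∑ s, ι s * ((1 - γ) * V s) := hvopt _ _ _ hV
    _ = DualObj τ r fun s a => if a = π s then d' s else 0 :=
      (hd'.dualObj_eq_of_bellmanQ_eq hVπ).symm
    _ ≤ DualObj τ r p := hpopt _ _ ⟨hd', hpc'⟩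

theorem complementary_slackness {d : S → ℝ} {p : S → A → ℝ} (hd : DualFeas ι τ γ d p)
    (hpc : ∀ s a, p s a * stepMean τ c s a ≤ 0) {v : S → ℝ} {q rc : S → A → ℝ}
    (hv : PrimalFeas τ γ r c v q rc) (hgap : ∑ s, ι s * ((1 - γ) * v s) ≤ DualObj τ r p) :
    (∀ s a, p s a * (v s - q s a) = 0) ∧ ∀ s a, rc s a * (p s a * stepMean τ c s a) = 0 := by
  have hnonneg : ∀ f : S → A → ℝ, (∀ s a, 0 ≤ f s a) → 0 ≤ ∑ s, ∑ a, f s a :=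
    fun f hf => sum_nonneg fun s _ => sum_nonneg fun a _ => hf s a
  have hzero : ∀ f : S → A → ℝ, (∀ s a, 0 ≤ f s a) → ∑ s, ∑ a, f s a ≤ 0 → ∀ s a, f s a = 0 :=
    fun f hf hsum s a => (sum_eq_zero_iff_of_nonneg fun a _ => hf s a).1
      ((sum_eq_zero_iff_of_nonneg fun s _ => sum_nonneg fun a _ => hf s a).1
        (le_antisymm hsum (hnonneg f hf)) s (mem_univ s)) a (mem_univ a)
  have h1 : ∀ s a, 0 ≤ p s a * (v s - q s a) := fun s a =>
    mul_nonneg (hd.2.2 s a) (sub_nonneg.2 (hv.1 s a))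
  have h2 : ∀ s a, 0 ≤ -(rc s a * (p s a * stepMean τ c s a)) := fun s a =>
    neg_nonneg.2 (mul_nonpos_of_nonneg_of_nonpos (hv.2.2 s a) (hpc s a))
  have hgaps : ∑ s, ∑ a, p s a * (v s - q s a) +
      ∑ s, ∑ a, -(rc s a * (p s a * stepMean τ c s a)) ≤ 0 := by
    simp only [sum_neg_distrib]
    linarith [hd.dualObj_eq_sub_gaps hv.2.1]
  exact ⟨hzero _ h1 (by linarith [hnonneg _ h2]),
    fun s a => neg_eq_zero.1 (hzero _ h2 (by linarith [hnonneg _ h1]) s a)⟩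

end Optimality

end

theorem atc_primal_dual_optimality_general
    {S A : Type*} [Fintype S] [Fintype A] [Nonempty A]
    (ι : S → ℝ) (τ : S → A → S → ℝ) (γ : ℝ) (r : S → A → S → ℝ)
    (hMDP : IsMDP ι τ γ)
    (c : S → A → S → ℝ)
    (dStar : S → ℝ) (pStar : S → A → ℝ)
    (hDFeas : DualFeas ι τ γ dStar pStar ∧
      ∀ s a, pStar s a * (∑ s', τ s a s' * c s a s') ≤ 0)
    (hDOpt : ∀ (d : S → ℝ) (p : S → A → ℝ),
      (DualFeas ι τ γ d p ∧
        ∀ s a, p s a * (∑ s', τ s a s' * c s a s') ≤ 0) →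
      DualObj τ r p ≤ DualObj τ r pStar)
    (vStar : S → ℝ) (qStar rcStar : S → A → ℝ)
    (hPFeas : (∀ s a, qStar s a ≤ vStar s) ∧
      (∀ s a, qStar s a = ∑ s', τ s a s' *
        (r s a s' - rcStar s a * c s a s' + γ * vStar s')) ∧
      ∀ s a, 0 ≤ rcStar s a)
    (hPOpt : ∀ (v : S → ℝ) (q rc : S → A → ℝ),
      ((∀ s a, q s a ≤ v s) ∧
        (∀ s a, q s a = ∑ s', τ s a s' *
          (r s a s' - rc s a * c s a s' + γ * v s')) ∧
        ∀ s a, 0 ≤ rc s a) →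
      ∑ s, ι s * ((1 - γ) * vStar s) ≤ ∑ s, ι s * ((1 - γ) * v s)) :
    (∀ s, vStar s = ⨆ a, ∑ s', τ s a s' *
      (r s a s' - rcStar s a * c s a s' + γ * vStar s')) ∧
    (∀ s a, qStar s a = ∑ s', τ s a s' *
      (r s a s' - rcStar s a * c s a s' + γ * vStar s')) ∧
    (∀ v : S → ℝ,
      (∀ s, v s = ⨆ a, ∑ s', τ s a s' *
        (r s a s' - rcStar s a * c s a s' + γ * v s')) → v = vStar) ∧
    (∀ s a, 0 < pStar s a / dStar s → ∀ a', qStar s a' ≤ qStar s a) ∧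
    (∀ s a, 0 < pStar s a → (∑ s', τ s a s' * c s a s') < 0 → rcStar s a = 0) := by
  obtain ⟨hι, -, hτ0, hτ1, hγ0, hγ1⟩ := hMDP
  have hbellman : IsBellmanOptimal τ γ (atcReward r c rcStar) vStar :=
    isBellmanOptimal_of_primal_optimal hι hτ0 hτ1 hγ0 hγ1 hPFeas hPOpt
  obtain ⟨hgreedy, hslack⟩ := complementary_slackness hDFeas.1 hDFeas.2 hPFeas
    (primalValue_le_dualObj hι hτ0 hτ1 hγ0 hγ1 hDFeas.1 hDFeas.2 hDOpt hPOpt)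
  refine ⟨isBellmanOptimal_iff_eq_ciSup.1 hbellman, hPFeas.2.1, fun v hv =>
    (isBellmanOptimal_iff_eq_ciSup.2 hv).unique hτ0 hτ1 hγ0 hγ1 hbellman, ?_, ?_⟩
  · intro s a hpos a'
    have hp : 0 < pStar s a :=
      (div_pos_iff.1 hpos).elim And.left fun h => absurd h.1 (not_lt.2 (hDFeas.1.2.2 s a))
    have hq : qStar s a = vStar s := by
      linarith [(mul_eq_zero.1 (hgreedy s a)).resolve_left hp.ne']
    exact hq ▸ hPFeas.1 s a'
  · intro s a hp hc
    exact (mul_eq_zero.1 (hslack s a)).resolve_right (mul_neg_of_pos_of_neg hp hc).ne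

/-- given optimal solutions of the (feasible) transition-constrained dual
and primal LPs: (i) `v*`, `q*` satisfy the Bellman optimality equations for the modified
reward `r*_ATC = r − r_c*·c` (so they are the optimal value functions for `r*_ATC`);
(ii) the derived policy `π* = p*/d*` is greedy w.r.t. `q*`; and (iii) `r_c*(s,a) = 0`
whenever `p*(s,a) > 0` and `c̄(s,a) < 0`. -/
theorem atc_primal_dual_optimality
    {S A : Type*} [Fintype S] [Fintype A] [Nonempty S] [Nonempty A]
    (ι : S → ℝ) (τ : S → A → S → ℝ) (γ : ℝ) (r : S → A → S → ℝ)
    (hMDP : IsMDP ι τ γ)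
    (c : S → A → S → ℝ)
    (dStar : S → ℝ) (pStar : S → A → ℝ)
    (hDFeas : DualFeas ι τ γ dStar pStar ∧
      ∀ s a, pStar s a * (∑ s', τ s a s' * c s a s') ≤ 0)
    (hDOpt : ∀ (d : S → ℝ) (p : S → A → ℝ),
      (DualFeas ι τ γ d p ∧
        ∀ s a, p s a * (∑ s', τ s a s' * c s a s') ≤ 0) →
      DualObj τ r p ≤ DualObj τ r pStar)
    (vStar : S → ℝ) (qStar rcStar : S → A → ℝ)
    (hPFeas : (∀ s a, qStar s a ≤ vStar s) ∧
      (∀ s a, qStar s a = ∑ s', τ s a s' *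
        (r s a s' - rcStar s a * c s a s' + γ * vStar s')) ∧
      ∀ s a, 0 ≤ rcStar s a)
    (hPOpt : ∀ (v : S → ℝ) (q rc : S → A → ℝ),
      ((∀ s a, q s a ≤ v s) ∧
        (∀ s a, q s a = ∑ s', τ s a s' *
          (r s a s' - rc s a * c s a s' + γ * v s')) ∧
        ∀ s a, 0 ≤ rc s a) →
      ∑ s, ι s * ((1 - γ) * vStar s) ≤ ∑ s, ι s * ((1 - γ) * v s)) :
    (∀ s, vStar s = ⨆ a, ∑ s', τ s a s' *
      (r s a s' - rcStar s a * c s a s' + γ * vStar s')) ∧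
    (∀ s a, qStar s a = ∑ s', τ s a s' *
      (r s a s' - rcStar s a * c s a s' + γ * vStar s')) ∧
    (∀ v : S → ℝ,
      (∀ s, v s = ⨆ a, ∑ s', τ s a s' *
        (r s a s' - rcStar s a * c s a s' + γ * v s')) → v = vStar) ∧
    (∀ s a, 0 < pStar s a / dStar s → ∀ a', qStar s a' ≤ qStar s a) ∧
    (∀ s a, 0 < pStar s a → (∑ s', τ s a s' * c s a s') < 0 → rcStar s a = 0) :=
  atc_primal_dual_optimality_general ι τ γ r hMDP c dStar pStar hDFeas hDOpt vStar qStar rcStar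
    hPFeas hPOpt
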